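/- For any $K\times K$ doubly-indexed family $R_{ka} \ge 0$ with $\sum_k R_{ka} = \pi_a$ (column sums fixed), and real symmetric matrix $W \in \mathbb{R}^{K\times K}$ satisfying $W_{aa} > 0$ for all $a$ and $W_{ab} < 0$ for all $a \ne b$, the quantity $\sum_{k,h}\triangle_{kh}\sum_{a,b} R_{ka}R_{hb}W_{ab}$ (with $\triangle_{kh} = 1$ if $k = h$, $-1$ otherwise) is maximized over such $R$ at $R_{ka} = \pi_a 1(k = a)$ (up to permutation of rows), where it equals $\sum_{a,b}\triangle_{ab}\pi_a\pi_b W_{ab}$. -/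
import Mathlib

lemma sum4_comm {α : Type*} [Fintype α] (f : α → α → α → α → ℝ) :
    ∑ k, ∑ h, ∑ a, ∑ b, f k h a b = ∑ a, ∑ b, ∑ k, ∑ h, f k h a b := by
  have s1 : ∀ k, ∑ h, ∑ a, ∑ b, f k h a b = ∑ a, ∑ h, ∑ b, f k h a b :=
    fun k => Finset.sum_comm
  simp_rw [s1]
  rw [Finset.sum_comm]
  apply Finset.sum_congr rfl; intro a _
  have s2 : ∀ k, ∑ h, ∑ b, f k h a b = ∑ b, ∑ h, f k h a b :=
    fun k => Finset.sum_comm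
  simp_rw [s2]
  exact Finset.sum_comm

theorem stmt15 (K : ℕ) (p : Fin K → ℝ) (hp : ∀ a, 0 ≤ p a)
    (W : Fin K → Fin K → ℝ) (hWsym : ∀ a b, W a b = W b a)
    (hWd : ∀ a, 0 < W a a) (hWo : ∀ a b, a ≠ b → W a b < 0) :
    (∀ R : Fin K → Fin K → ℝ, (∀ k a, 0 ≤ R k a) → (∀ a, ∑ k, R k a = p a) →
      ∑ k, ∑ h, (if k = h then (1 : ℝ) else -1) * ∑ a, ∑ b, R k a * R h b * W a b ≤
        ∑ a, ∑ b, (if a = b then (1 : ℝ) else -1) * p a * p b * W a b) ∧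
    (∑ k, ∑ h, (if k = h then (1 : ℝ) else -1) * ∑ a, ∑ b,
        (if k = a then p a else 0) * (if h = b then p b else 0) * W a b =
      ∑ a, ∑ b, (if a = b then (1 : ℝ) else -1) * p a * p b * W a b) := by
  constructor
  · intro R hR hRs
    have key : ∑ k, ∑ h, (if k = h then (1 : ℝ) else -1) * ∑ a, ∑ b, R k a * R h b * W a b
        = ∑ a, ∑ b, (∑ k, ∑ h, (if k = h then (1 : ℝ) else -1) * (R k a * R h b)) * W a b := by
      calc ∑ k, ∑ h, (if k = h then (1 : ℝ) else -1) * ∑ a, ∑ b, R k a * R h b * W a b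
          = ∑ k, ∑ h, ∑ a, ∑ b, (if k = h then (1 : ℝ) else -1) * (R k a * R h b) * W a b := by
            apply Finset.sum_congr rfl; intro k _
            apply Finset.sum_congr rfl; intro h _
            rw [Finset.mul_sum]
            apply Finset.sum_congr rfl; intro a _
            rw [Finset.mul_sum]
            apply Finset.sum_congr rfl; intro b _
            ring
        _ = ∑ a, ∑ b, ∑ k, ∑ h, (if k = h then (1 : ℝ) else -1) * (R k a * R h b) * W a b :=
            sum4_comm _
        _ = ∑ a, ∑ b, (∑ k, ∑ h, (if k = h then (1 : ℝ) else -1) * (R k a * R h b)) * W a b := by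
            apply Finset.sum_congr rfl; intro a _
            apply Finset.sum_congr rfl; intro b _
            rw [Finset.sum_mul]
            apply Finset.sum_congr rfl; intro k _
            rw [Finset.sum_mul]
    rw [key]
    apply Finset.sum_le_sum; intro a _
    apply Finset.sum_le_sum; intro b _
    have hsum : ∑ k, ∑ h, R k a * R h b = p a * p b := by
      rw [← hRs a, ← hRs b, Finset.sum_mul_sum]
    by_cases hab : a = b
    · subst hab
      rw [if_pos rfl, one_mul]
      have h1 : ∑ k, ∑ h, (if k = h then (1 : ℝ) else -1) * (R k a * R h a) ≤ p a * p a := by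
        rw [← hsum]
        apply Finset.sum_le_sum; intro k _
        apply Finset.sum_le_sum; intro h _
        have := mul_nonneg (hR k a) (hR h a)
        split <;> nlinarith
      nlinarith [mul_le_mul_of_nonneg_right h1 (hWd a).le]
    · rw [if_neg hab]
      have h1 : -(p a * p b) ≤ ∑ k, ∑ h, (if k = h then (1 : ℝ) else -1) * (R k a * R h b) := by
        rw [← hsum, ← Finset.sum_neg_distrib]
        apply Finset.sum_le_sum; intro k _
        rw [← Finset.sum_neg_distrib]
        apply Finset.sum_le_sum; intro h _
        have := mul_nonneg (hR k a) (hR h b)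
        split <;> nlinarith
      have hW := hWo a b hab
      nlinarith [mul_le_mul_of_nonneg_right (neg_le_neg h1) (neg_pos.mpr hW).le]
  · apply Finset.sum_congr rfl; intro k _
    apply Finset.sum_congr rfl; intro h _
    have hin : ∑ a, ∑ b, (if k = a then p a else 0) * (if h = b then p b else 0) * W a b
        = p k * p h * W k h := by
      rw [Finset.sum_eq_single k]
      · rw [if_pos rfl, Finset.sum_eq_single h]
        · rw [if_pos rfl]
        · intro b _ hb; rw [if_neg (Ne.symm hb), mul_zero, zero_mul]
        · intro h'; exact absurd (Finset.mem_univ h) h'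
      · intro a _ ha
        apply Finset.sum_eq_zero; intro b _
        rw [if_neg (Ne.symm ha), zero_mul, zero_mul]
      · intro h'; exact absurd (Finset.mem_univ k) h'
    rw [hin]; ring
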